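/- arXiv:2211.01121 — 2 statements merged into one kernel-verified Lean document; each statement's English description precedes it below -/
import Mathlib

section
/- Suppose α₀ > 0 satisfies (1−α₀)·e^{α₀} + 1 = 0 (so α₀ ≈ 1.278). Let 0 < α ≤ α₀, let σ be real with 1/2 < σ < 1, and let m be a positive integer. Then Â(m,α₀,σ) ≤ Â(m,α,σ). -/
/-- The function `A(a,α,u,σ)` from the paper. -/
noncomputable def SelbergA (a α u σ : ℝ) : ℝ :=
  a * (2 * σ - 1) * (1 - Real.exp (-(2 * α * (1 - u)) / (2 * σ - 1))) / (2 * α * (1 - u) ^ 2)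

/-- The function `Â(m,α,σ) = A(m,α,σ,σ) + (e^α+1)/(2α)`. -/
noncomputable def SelbergAhat (m α σ : ℝ) : ℝ :=
  SelbergA m α σ σ + (Real.exp α + 1) / (2 * α)

/-- `(1 - e^{-cb})/b ≤ (1 - e^{-ca})/a` for `0 < a ≤ b`, `0 ≤ c`, by convexity of `exp`. -/
lemma aux_first (a b c : ℝ) (ha : 0 < a) (hab : a ≤ b) (hc : 0 ≤ c) :
    (1 - Real.exp (-(c * b))) / b ≤ (1 - Real.exp (-(c * a))) / a := by
  have hb : 0 < b := lt_of_lt_of_le ha hab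
  have ht0 : 0 ≤ a / b := by positivity
  have ht1 : 0 ≤ 1 - a / b := by
    have : a / b ≤ 1 := (div_le_one hb).2 hab
    linarith
  have hsum : (1 - a / b) + a / b = 1 := by ring
  have key := convexOn_exp.2 (Set.mem_univ (0:ℝ)) (Set.mem_univ (-(c * b))) ht1 ht0 hsum
  simp only [smul_eq_mul, mul_zero, zero_add, Real.exp_zero, mul_one] at key
  have hab' : a / b * -(c * b) = -(c * a) := by field_simp
  rw [hab'] at key
  have key2 : b * Real.exp (-(c * a)) ≤ b - a + a * Real.exp (-(c * b)) := by
    have h := mul_le_mul_of_nonneg_left key hb.le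
    have heq : b * (1 - a / b + a / b * Real.exp (-(c * b)))
        = b - a + a * Real.exp (-(c * b)) := by field_simp
    linarith [heq ▸ h]
  rw [div_le_div_iff₀ hb ha]
  nlinarith [key2]

/-- `(x-1)e^x` is monotone on `[0, b]`. -/
lemma aux_mono (b : ℝ) : MonotoneOn (fun x : ℝ => (x - 1) * Real.exp x) (Set.Icc 0 b) := by
  have hD : ∀ x : ℝ, HasDerivAt (fun x : ℝ => (x - 1) * Real.exp x) (x * Real.exp x) x := by
    intro x
    have h1 : HasDerivAt (fun x : ℝ => x - 1) 1 x := (hasDerivAt_id x).sub_const 1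
    have h2 : HasDerivAt (fun x : ℝ => (x - 1) * Real.exp x)
        (1 * Real.exp x + (x - 1) * Real.exp x) x := h1.mul (Real.hasDerivAt_exp x)
    convert h2 using 1
    ring
  apply monotoneOn_of_deriv_nonneg (convex_Icc 0 b)
  · exact (continuous_id.sub continuous_const).mul Real.continuous_exp |>.continuousOn
  · intro x _
    exact (hD x).differentiableAt.differentiableWithinAt
  · intro x hx
    rw [interior_Icc] at hx
    rw [(hD x).deriv]
    have := Real.exp_pos x
    nlinarith [hx.1]

/-- The second summand is antitone on `(0, α₀]`. -/
lemma aux_second (α₀ α : ℝ) (hα₀pos : 0 < α₀) (hα₀ : (1 - α₀) * Real.exp α₀ + 1 = 0)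
    (hαpos : 0 < α) (hα : α ≤ α₀) :
    (Real.exp α₀ + 1) / (2 * α₀) ≤ (Real.exp α + 1) / (2 * α) := by
  have hD : ∀ x : ℝ, x ≠ 0 → HasDerivAt (fun x : ℝ => (Real.exp x + 1) / (2 * x))
      ((Real.exp x * (2 * x) - (Real.exp x + 1) * 2) / (2 * x) ^ 2) x := by
    intro x hx
    have hne : (2 * x : ℝ) ≠ 0 := by simp [hx]
    have h1 : HasDerivAt (fun x : ℝ => Real.exp x + 1) (Real.exp x) x :=
      (Real.hasDerivAt_exp x).add_const 1
    have h2 : HasDerivAt (fun x : ℝ => 2 * x) 2 x := by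
      simpa using (hasDerivAt_id x).const_mul 2
    exact h1.div h2 hne
  have hanti : AntitoneOn (fun x : ℝ => (Real.exp x + 1) / (2 * x)) (Set.Icc α α₀) := by
    apply antitoneOn_of_deriv_nonpos (convex_Icc α α₀)
    · apply ContinuousOn.div
      · exact (Real.continuous_exp.add continuous_const).continuousOn
      · exact (continuous_const.mul continuous_id).continuousOn
      · intro x hx
        have : 0 < x := lt_of_lt_of_le hαpos hx.1
        positivity
    · intro x hx
      rw [interior_Icc] at hx
      have hx0 : 0 < x := lt_of_lt_of_le hαpos hx.1.le
      exact (hD x hx0.ne').differentiableAt.differentiableWithinAt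
    · intro x hx
      rw [interior_Icc] at hx
      have hx0 : 0 < x := lt_of_lt_of_le hαpos hx.1.le
      rw [(hD x hx0.ne').deriv]
      apply div_nonpos_of_nonpos_of_nonneg _ (by positivity)
      have hmono := aux_mono α₀ (Set.mem_Icc.2 ⟨hx0.le, hx.2.le⟩)
        (Set.mem_Icc.2 ⟨hα₀pos.le, le_refl α₀⟩) hx.2.le
      simp only at hmono
      have hA : (α₀ - 1) * Real.exp α₀ = 1 := by nlinarith [hα₀]
      nlinarith [hmono]
  exact hanti (Set.mem_Icc.2 ⟨le_refl α, hα⟩) (Set.mem_Icc.2 ⟨hα, le_refl α₀⟩) hα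

theorem stmt2 (α₀ α σ : ℝ) (m : ℕ) (hm : 0 < m)
    (hα₀pos : 0 < α₀) (hα₀ : (1 - α₀) * Real.exp α₀ + 1 = 0)
    (hαpos : 0 < α) (hα : α ≤ α₀)
    (hσ1 : 1 / 2 < σ) (hσ2 : σ < 1) :
    SelbergAhat m α₀ σ ≤ SelbergAhat m α σ := by
  have hs : 0 < 2 * σ - 1 := by linarith
  have hu : 0 < 1 - σ := by linarith
  set c : ℝ := 2 * (1 - σ) / (2 * σ - 1) with hc
  have hc0 : 0 ≤ c := by positivity
  have hK : (0:ℝ) ≤ (m : ℝ) * (2 * σ - 1) / (2 * (1 - σ) ^ 2) := by positivity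
  have hrw : ∀ β : ℝ, 0 < β → SelbergA m β σ σ =
      (m : ℝ) * (2 * σ - 1) / (2 * (1 - σ) ^ 2) * ((1 - Real.exp (-(c * β))) / β) := by
    intro β hβ
    have he : -(2 * β * (1 - σ)) / (2 * σ - 1) = -(c * β) := by
      have : c * β = 2 * β * (1 - σ) / (2 * σ - 1) := by rw [hc]; ring
      rw [this, neg_div]
    rw [SelbergA, he]
    set X := Real.exp (-(c * β)) with hX
    rw [div_mul_div_comm]
    congr 1
    ring
  have h1 := aux_first α α₀ c hαpos hα hc0
  have h2 := aux_second α₀ α hα₀pos hα₀ hαpos hα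
  rw [SelbergAhat, SelbergAhat, hrw α₀ hα₀pos, hrw α hαpos]
  have := mul_le_mul_of_nonneg_left h1 hK
  linarith
end

section
/- Let a ≥ 2 be real, let b be real with 0 ≤ b < 1, and let ν₁ > 0 and ν₂ > 1 be reals with ν₁ ≤ (1−b)·log a/ν₂. Then ∫_2^a du/(u^b·log u) ≤ (a^{1−b} − 1)/((1−b)·log a) + log log a − (2^{1−b} − 1)/((1−b)·log 2) − log log 2 + ν₂^2·a^{1−b}/((1−b)^2·(log a)^2) + a^{(1−b)/ν₂}/ν₁^2 + ∫_0^{ν₁} (e^u − u − 1)/u^2 du. -/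
open Real MeasureTheory Set intervalIntegral

noncomputable def Hfun (t : ℝ) : ℝ := (Real.exp t - t - 1) / t ^ 2

lemma Hfun_nonneg (t : ℝ) : 0 ≤ Hfun t :=
  div_nonneg (by nlinarith [Real.add_one_le_exp t]) (sq_nonneg t)

lemma Hfun_contOn {s : Set ℝ} (hs : ∀ t ∈ s, t ≠ 0) : ContinuousOn Hfun s := by
  apply ContinuousOn.div
  · fun_prop
  · fun_prop
  · intro t ht
    exact pow_ne_zero 2 (hs t ht)

lemma Hfun_bound {c t : ℝ} (h0 : 0 ≤ t) (hc : t ≤ c) : |Hfun t| ≤ 1 + Real.exp c := by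
  rw [abs_of_nonneg (Hfun_nonneg t)]
  rcases le_or_gt t 1 with h1 | h1
  · have := Real.exp_bound (x := t) (by rw [abs_of_nonneg h0]; exact h1) (n := 2) (by norm_num)
    have hsum : ∑ m ∈ Finset.range 2, t ^ m / m.factorial = 1 + t := by
      simp [Finset.sum_range_succ]
    rw [hsum, abs_of_nonneg h0] at this
    have h2 : Real.exp t - t - 1 ≤ t ^ 2 * (3 / 2 / 2) := by
      have h3 := (abs_le.mp this).2
      norm_num [Nat.factorial] at h3
      nlinarith
    rcases eq_or_lt_of_le h0 with h | h
    · simp only [Hfun, ← h]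
      norm_num
      positivity
    · have : Hfun t ≤ 3 / 4 := by
        rw [Hfun, div_le_iff₀ (by positivity)]
        nlinarith
      nlinarith [Real.exp_pos c]
  · have : Hfun t ≤ Real.exp t := by
      rw [Hfun, div_le_iff₀ (by positivity)]
      have h2 : (1:ℝ) ≤ t ^ 2 := one_le_pow₀ h1.le
      nlinarith [Real.exp_pos t]
    have := Real.exp_le_exp.mpr hc
    nlinarith [Real.exp_pos c]

lemma Hfun_integrable {c : ℝ} (hc : 0 ≤ c) : IntervalIntegrable Hfun volume 0 c := by
  rw [intervalIntegrable_iff_integrableOn_Icc_of_le hc]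
  apply Measure.integrableOn_of_bounded (M := 1 + Real.exp c) (measure_Icc_lt_top).ne
  · apply Measurable.aestronglyMeasurable
    exact ((Real.measurable_exp.sub measurable_id).sub measurable_const).div
      (measurable_id.pow_const 2)
  · filter_upwards [ae_restrict_mem measurableSet_Icc] with t ht
    exact Hfun_bound ht.1 ht.2

set_option maxHeartbeats 1000000 in
theorem stmt17 (a b ν₁ ν₂ : ℝ) (ha : 2 ≤ a) (hb0 : 0 ≤ b) (hb1 : b < 1)
    (hν₁ : 0 < ν₁) (hν₂ : 1 < ν₂) (hle : ν₁ ≤ (1 - b) * Real.log a / ν₂) :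
    (∫ u in (2 : ℝ)..a, 1 / (u ^ b * Real.log u)) ≤
      (a ^ (1 - b) - 1) / ((1 - b) * Real.log a) + Real.log (Real.log a)
        - ((2 : ℝ) ^ (1 - b) - 1) / ((1 - b) * Real.log 2) - Real.log (Real.log 2)
        + ν₂ ^ 2 * a ^ (1 - b) / ((1 - b) ^ 2 * Real.log a ^ 2)
        + a ^ ((1 - b) / ν₂) / ν₁ ^ 2
        + ∫ u in (0 : ℝ)..ν₁, (Real.exp u - u - 1) / u ^ 2 := by
  have h1b : 0 < 1 - b := by linarith
  have ha0 : (0:ℝ) < a := by linarith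
  have hl2 : 0 < Real.log 2 := Real.log_pos one_lt_two
  have hla2 : Real.log 2 ≤ Real.log a := Real.log_le_log two_pos ha
  have hla : 0 < Real.log a := lt_of_lt_of_le hl2 hla2
  set x := (1 - b) * Real.log 2 with hxdef
  set y := (1 - b) * Real.log a with hydef
  have hx0 : 0 < x := mul_pos h1b hl2
  have hy0 : 0 < y := mul_pos h1b hla
  have hxy : x ≤ y := by
    apply mul_le_mul_of_nonneg_left hla2 h1b.le
  set z := y / ν₂ with hzdef
  have hν₂0 : 0 < ν₂ := lt_trans one_pos hν₂
  have hz0 : 0 < z := div_pos hy0 hν₂0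
  have hν₁z : ν₁ ≤ z := hle
  have hzy : z ≤ y := by
    rw [hzdef, div_le_iff₀ hν₂0]
    nlinarith
  -- Step A : substitution
  have hsub : (∫ u in (2 : ℝ)..a, 1 / (u ^ b * Real.log u))
      = ∫ t in x..y, Real.exp t / t := by
    have key := intervalIntegral.integral_comp_smul_deriv'
        (f := fun u => (1 - b) * Real.log u) (f' := fun u => (1 - b) * u⁻¹)
        (g := fun t => Real.exp t / t) (a := 2) (b := a)
        (fun u hu => by
          rw [uIcc_of_le ha] at hu
          have hu0 : (0:ℝ) < u := lt_of_lt_of_le two_pos hu.1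
          exact (Real.hasDerivAt_log hu0.ne').const_mul (1 - b))
        (by
          apply ContinuousOn.mul continuousOn_const
          apply ContinuousOn.inv₀ continuousOn_id
          intro u hu
          rw [uIcc_of_le ha] at hu
          exact (lt_of_lt_of_le two_pos hu.1).ne')
        (by
          apply ContinuousOn.div (Real.continuous_exp.continuousOn) continuousOn_id
          rintro t ⟨u, hu, rfl⟩
          rw [uIcc_of_le ha] at hu
          have hu1 : (1:ℝ) < u := lt_of_lt_of_le one_lt_two hu.1
          exact (mul_pos h1b (Real.log_pos hu1)).ne')
    simp only [smul_eq_mul, Function.comp] at key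
    rw [← key]
    apply intervalIntegral.integral_congr
    intro u hu
    rw [uIcc_of_le ha] at hu
    have hu0 : (0:ℝ) < u := lt_of_lt_of_le two_pos hu.1
    have hu1 : (1:ℝ) < u := lt_of_lt_of_le one_lt_two hu.1
    have hlu : 0 < Real.log u := Real.log_pos hu1
    have hexp : Real.exp ((1 - b) * Real.log u) = u / u ^ b := by
      rw [mul_comm, ← Real.rpow_def_of_pos hu0, Real.rpow_sub hu0, Real.rpow_one]
    have hub : (0:ℝ) < u ^ b := Real.rpow_pos_of_pos hu0 b
    simp only [hexp]
    field_simp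
  -- Step B : FTC in t-land
  have hcont_et : ContinuousOn (fun t => Real.exp t / t) (Icc x y) :=
    ContinuousOn.div (Real.continuous_exp.continuousOn) continuousOn_id
      (fun t ht => (lt_of_lt_of_le hx0 ht.1).ne')
  have hint_et : IntervalIntegrable (fun t => Real.exp t / t) volume x y := by
    rw [intervalIntegrable_iff_integrableOn_Icc_of_le hxy]
    exact hcont_et.integrableOn_Icc
  have hint_H_xy : IntervalIntegrable Hfun volume x y := by
    rw [intervalIntegrable_iff_integrableOn_Icc_of_le hxy]
    exact (Hfun_contOn (fun t ht => (lt_of_lt_of_le hx0 ht.1).ne')).integrableOn_Icc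
  have hFTC : ∫ t in x..y, (Real.exp t / t - Hfun t)
      = ((Real.exp y - 1) / y + Real.log y) - ((Real.exp x - 1) / x + Real.log x) := by
    apply intervalIntegral.integral_eq_sub_of_hasDerivAt
      (f := fun t => (Real.exp t - 1) / t + Real.log t)
    · intro t ht
      rw [uIcc_of_le hxy] at ht
      have ht0 : 0 < t := lt_of_lt_of_le hx0 ht.1
      have h1 : HasDerivAt (fun t => (Real.exp t - 1) / t)
          ((Real.exp t * t - (Real.exp t - 1) * 1) / t ^ 2) t :=
        ((Real.hasDerivAt_exp t).sub_const 1).div (hasDerivAt_id t) ht0.ne'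
      have h2 : HasDerivAt Real.log t⁻¹ t := Real.hasDerivAt_log ht0.ne'
      convert h1.add h2 using 1
      · rfl
      rw [Hfun]
      field_simp
      ring
    · exact hint_et.sub hint_H_xy
  have hsplit : ∫ t in x..y, Real.exp t / t
      = ((Real.exp y - 1) / y + Real.log y) - ((Real.exp x - 1) / x + Real.log x)
        + ∫ t in x..y, Hfun t := by
    rw [← hFTC, intervalIntegral.integral_sub hint_et hint_H_xy]
    ring
  -- Step C : bounding ∫_x^y Hfun
  have hint0y : IntervalIntegrable Hfun volume 0 y := Hfun_integrable hy0.le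
  have hint0x : IntervalIntegrable Hfun volume 0 x := Hfun_integrable hx0.le
  have hxyH : ∫ t in x..y, Hfun t ≤ ∫ t in (0:ℝ)..y, Hfun t := by
    have hadd := intervalIntegral.integral_add_adjacent_intervals hint0x hint_H_xy
    have h0 : 0 ≤ ∫ t in (0:ℝ)..x, Hfun t :=
      intervalIntegral.integral_nonneg hx0.le fun t _ => Hfun_nonneg t
    linarith [hadd]
  have hintν₁ : IntervalIntegrable Hfun volume 0 ν₁ := Hfun_integrable hν₁.le
  have hintν₁z : IntervalIntegrable Hfun volume ν₁ z :=
    hint0y.mono_set (by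
      rw [uIcc_of_le hν₁z, uIcc_of_le hy0.le]
      exact Icc_subset_Icc hν₁.le (le_trans hzy le_rfl))
  have hintzy : IntervalIntegrable Hfun volume z y :=
    hint0y.mono_set (by
      rw [uIcc_of_le hzy, uIcc_of_le hy0.le]
      exact Icc_subset_Icc hz0.le le_rfl)
  have hsplit2 : ∫ t in (0:ℝ)..y, Hfun t
      = (∫ t in (0:ℝ)..ν₁, Hfun t) + ((∫ t in ν₁..z, Hfun t) + ∫ t in z..y, Hfun t) := by
    rw [intervalIntegral.integral_add_adjacent_intervals hintν₁z hintzy,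
        intervalIntegral.integral_add_adjacent_intervals hintν₁ (hintν₁z.trans hintzy)]
  have hmid : ∫ t in ν₁..z, Hfun t ≤ Real.exp z / ν₁ ^ 2 := by
    have hint_e : IntervalIntegrable (fun t => Real.exp t / ν₁ ^ 2) volume ν₁ z :=
      (Real.continuous_exp.div_const _).intervalIntegrable _ _
    have hmono : ∫ t in ν₁..z, Hfun t ≤ ∫ t in ν₁..z, Real.exp t / ν₁ ^ 2 := by
      apply intervalIntegral.integral_mono_on hν₁z hintν₁z hint_e
      intro t ht
      have ht0 : 0 < t := lt_of_lt_of_le hν₁ ht.1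
      rw [Hfun, div_le_div_iff₀ (by positivity) (by positivity)]
      have h1 : ν₁ ^ 2 ≤ t ^ 2 := pow_le_pow_left₀ hν₁.le ht.1 2
      have h2 : 0 ≤ Real.exp t - t - 1 := by nlinarith [Real.add_one_le_exp t]
      nlinarith [mul_le_mul_of_nonneg_left h1 h2, mul_nonneg (by positivity : (0:ℝ) ≤ t + 1) (sq_nonneg t)]
    have heq : ∫ t in ν₁..z, Real.exp t / ν₁ ^ 2 = (Real.exp z - Real.exp ν₁) / ν₁ ^ 2 := by
      rw [intervalIntegral.integral_div, integral_exp]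
    rw [heq] at hmono
    have : (Real.exp z - Real.exp ν₁) / ν₁ ^ 2 ≤ Real.exp z / ν₁ ^ 2 := by
      gcongr
      linarith [Real.exp_pos ν₁]
    linarith
  have htail : ∫ t in z..y, Hfun t ≤ ν₂ ^ 2 * Real.exp y / y ^ 2 := by
    have hint_e : IntervalIntegrable (fun t => Real.exp t * (ν₂ ^ 2 / y ^ 2)) volume z y :=
      (Real.continuous_exp.mul continuous_const).intervalIntegrable _ _
    have hmono : ∫ t in z..y, Hfun t ≤ ∫ t in z..y, Real.exp t * (ν₂ ^ 2 / y ^ 2) := by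
      apply intervalIntegral.integral_mono_on hzy hintzy hint_e
      intro t ht
      have ht0 : 0 < t := lt_of_lt_of_le hz0 ht.1
      have hz2 : z ^ 2 ≤ t ^ 2 := pow_le_pow_left₀ hz0.le ht.1 2
      have hy2 : y ^ 2 = ν₂ ^ 2 * z ^ 2 := by
        rw [hzdef]
        field_simp
      rw [Hfun]
      rw [div_le_iff₀ (pow_pos ht0 2)]
      have h2 : 0 ≤ Real.exp t - t - 1 := by nlinarith [Real.add_one_le_exp t]
      have hrw : Real.exp t * (ν₂ ^ 2 / y ^ 2) * t ^ 2 = Real.exp t * (ν₂ ^ 2 * t ^ 2) / y ^ 2 := by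
        ring
      rw [hrw, le_div_iff₀ (pow_pos hy0 2)]
      have h3 : (Real.exp t - t - 1) * y ^ 2 ≤ Real.exp t * (ν₂ ^ 2 * t ^ 2) := by
        rw [hy2]
        have h4 : (Real.exp t - t - 1) * (ν₂ ^ 2 * z ^ 2) ≤ (Real.exp t - t - 1) * (ν₂ ^ 2 * t ^ 2) := by
          gcongr
        have h5 : (Real.exp t - t - 1) * (ν₂ ^ 2 * t ^ 2) ≤ Real.exp t * (ν₂ ^ 2 * t ^ 2) := by
          apply mul_le_mul_of_nonneg_right _ (by positivity)
          nlinarith [ht0]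
        linarith
      exact h3
    have heq : ∫ t in z..y, Real.exp t * (ν₂ ^ 2 / y ^ 2)
        = (Real.exp y - Real.exp z) * (ν₂ ^ 2 / y ^ 2) := by
      rw [intervalIntegral.integral_mul_const, integral_exp]
    rw [heq] at hmono
    have hval : ν₂ ^ 2 * Real.exp y / y ^ 2 = Real.exp y * (ν₂ ^ 2 / y ^ 2) := by ring
    have hpos : 0 < ν₂ ^ 2 / y ^ 2 := by positivity
    have hez := Real.exp_pos z
    rw [hval]
    nlinarith
  -- Conversions back to the original quantities
  have hey : Real.exp y = a ^ (1 - b) := by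
    rw [Real.rpow_def_of_pos ha0, hydef, mul_comm]
  have hex : Real.exp x = (2 : ℝ) ^ (1 - b) := by
    rw [Real.rpow_def_of_pos two_pos, hxdef, mul_comm]
  have hez : Real.exp z = a ^ ((1 - b) / ν₂) := by
    rw [Real.rpow_def_of_pos ha0, hzdef, hydef]
    congr 1
    ring
  have hlogy : Real.log y = Real.log (1 - b) + Real.log (Real.log a) := by
    rw [hydef, Real.log_mul h1b.ne' hla.ne']
  have hlogx : Real.log x = Real.log (1 - b) + Real.log (Real.log 2) := by
    rw [hxdef, Real.log_mul h1b.ne' hl2.ne']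
  have hy2' : y ^ 2 = (1 - b) ^ 2 * Real.log a ^ 2 := by rw [hydef, mul_pow]
  have hHint : (∫ u in (0 : ℝ)..ν₁, (Real.exp u - u - 1) / u ^ 2)
      = ∫ t in (0 : ℝ)..ν₁, Hfun t := rfl
  rw [hsub, hsplit, hHint, hey, hex, hlogy, hlogx]
  rw [hey, hy2'] at htail
  rw [hez] at hmid
  linarith [hxyH, hsplit2, hmid, htail]
end
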